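/- Let β > 0, M > 0, and set δ₀ = (1/2)·3^{β+1}/(2·3^{β+1} + (2M)^{β+1}). Let 0 < δ < δ₀ and let a, b ∈ [2 − δ, M]. Let c > 0 satisfy c ≤ min(a,b) + δ and c ≤ max(a,b) − (1 − 2δ). Then a^{−β} + b^{−β} − 2c^{−β} ≤ −(1/2)·β·M^{−(β+1)}. -/

import Mathlib

/-!
The function `x ↦ x ^ (-β)` is convex on `(0, ∞)`, so it lies above its tangent lines at
`min a b` and at `max a b`. Evaluating both tangent lines at `c`, which lies at most `δ` to the
right of `min a b ≥ 3/2` and at least `1 - 2δ` to the left of `max a b ≤ M`, bounds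
`a ^ (-β) + b ^ (-β) - 2 c ^ (-β)` by `β δ (3/2)^(-(β+1)) - β (1 - 2δ) M^(-(β+1))`; the
threshold on `δ` is exactly what makes this at most `-(1/2) β M^(-(β+1))`.
-/

open Real Set

theorem ConvexOn.add_mul_sub_le_of_hasDerivAt {S : Set ℝ} {f : ℝ → ℝ} {f' x y : ℝ}
    (hf : ConvexOn ℝ S f) (hx : x ∈ S) (hy : y ∈ S) (hf' : HasDerivAt f f' x) :
    f x + f' * (y - x) ≤ f y := by
  rcases lt_trichotomy x y with hxy | rfl | hyx
  · have hslope := hf.le_slope_of_hasDerivAt hx hy hxy hf'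
    rw [slope_def_field, le_div_iff₀ (sub_pos.2 hxy)] at hslope
    linarith
  · simp
  · have hslope := hf.slope_le_of_hasDerivAt hy hx hyx hf'
    rw [slope_def_field, div_le_iff₀ (sub_pos.2 hyx)] at hslope
    linarith

theorem convexOn_rpow_of_nonpos {p : ℝ} (hp : p ≤ 0) : ConvexOn ℝ (Ioi 0) fun x : ℝ ↦ x ^ p := by
  refine MonotoneOn.convexOn_of_deriv (convex_Ioi 0)
    (fun x hx ↦ (continuousAt_rpow_const x p (Or.inl (ne_of_gt hx))).continuousWithinAt)
    (fun x hx ↦ (differentiableAt_rpow_const_of_ne p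
      (ne_of_gt (interior_subset hx : x ∈ Ioi (0 : ℝ)))).differentiableWithinAt) ?_
  rw [interior_Ioi]
  intro x hx y _ hxy
  simp only [Real.deriv_rpow_const]
  exact mul_le_mul_of_nonpos_left (rpow_le_rpow_of_nonpos hx hxy (by linarith)) hp

theorem rpow_neg_sub_rpow_neg_le {β x y : ℝ} (hβ : 0 ≤ β) (hx : 0 < x) (hy : 0 < y) :
    x ^ (-β) - y ^ (-β) ≤ β * x ^ (-(β + 1)) * (y - x) := by
  have hderiv : HasDerivAt (fun z : ℝ ↦ z ^ (-β)) (-β * x ^ (-(β + 1))) x := by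
    simpa [sub_eq_add_neg, add_comm] using hasDerivAt_rpow_const (p := -β) (Or.inl hx.ne')
  have := (convexOn_rpow_of_nonpos (neg_nonpos.2 hβ)).add_mul_sub_le_of_hasDerivAt
    (mem_Ioi.2 hx) (mem_Ioi.2 hy) hderiv
  linarith

theorem mul_three_halves_rpow_neg_add_lt {s M δ : ℝ} (hM : 0 < M)
    (hδ : δ < (1/2) * 3 ^ s / (2 * 3 ^ s + (2 * M) ^ s)) :
    δ * ((3/2 : ℝ) ^ (-s) + 2 * M ^ (-s)) < (1/2) * M ^ (-s) := by
  rw [mul_rpow (by norm_num) hM.le, lt_div_iff₀ (by positivity)] at hδ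
  rw [rpow_neg (by norm_num), rpow_neg hM.le, div_rpow (by norm_num) (by norm_num), inv_div,
    ← sub_pos]
  have hrhs : (1/2) * (M ^ s)⁻¹ - δ * (2 ^ s / 3 ^ s + 2 * (M ^ s)⁻¹)
      = ((1/2) * 3 ^ s - δ * (2 * 3 ^ s + 2 ^ s * M ^ s)) / (3 ^ s * M ^ s) := by
    field_simp
    ring
  rw [hrhs]
  exact div_pos (by linarith) (by positivity)

theorem rpow_neg_add_rpow_neg_sub_two_mul_le {β M δ x y c : ℝ} (hβ : 0 ≤ β) (hM : 0 < M)
    (hδ₀ : 0 ≤ δ)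
    (hδ : δ * ((3/2 : ℝ) ^ (-(β + 1)) + 2 * M ^ (-(β + 1))) ≤ (1/2) * M ^ (-(β + 1)))
    (hx : 2 - δ ≤ x) (hy : y ≤ M) (hc : 0 < c) (hcx : c ≤ x + δ) (hcy : c ≤ y - (1 - 2 * δ)) :
    x ^ (-β) + y ^ (-β) - 2 * c ^ (-β) ≤ -(1/2) * β * M ^ (-(β + 1)) := by
  have hβ1 : -(β + 1) ≤ 0 := by linarith
  have hu : 0 < (3/2 : ℝ) ^ (-(β + 1)) := by positivity
  have hv : 0 < M ^ (-(β + 1)) := by positivity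
  have hδ4 : δ ≤ 1/4 := by nlinarith
  have hx32 : 3/2 ≤ x := by linarith
  have hy0 : 0 < y := by linarith
  have hleft : x ^ (-β) - c ^ (-β) ≤ β * (3/2 : ℝ) ^ (-(β + 1)) * δ :=
    calc x ^ (-β) - c ^ (-β) ≤ β * x ^ (-(β + 1)) * (c - x) :=
          rpow_neg_sub_rpow_neg_le hβ (by linarith) hc
      _ ≤ β * x ^ (-(β + 1)) * δ := by gcongr; linarith
      _ ≤ β * (3/2 : ℝ) ^ (-(β + 1)) * δ := by
          have := rpow_le_rpow_of_nonpos (by norm_num) hx32 hβ1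
          gcongr
  have hright : y ^ (-β) - c ^ (-β) ≤ -(β * (1 - 2 * δ) * M ^ (-(β + 1))) :=
    calc y ^ (-β) - c ^ (-β) ≤ β * y ^ (-(β + 1)) * (c - y) := rpow_neg_sub_rpow_neg_le hβ hy0 hc
      _ ≤ β * y ^ (-(β + 1)) * (-(1 - 2 * δ)) := by gcongr; linarith
      _ = -(β * (1 - 2 * δ) * y ^ (-(β + 1))) := by ring
      _ ≤ -(β * (1 - 2 * δ) * M ^ (-(β + 1))) :=
          neg_le_neg (mul_le_mul_of_nonneg_left (rpow_le_rpow_of_nonpos hy0 hy hβ1)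
            (mul_nonneg hβ (by linarith)))
  linarith [mul_le_mul_of_nonneg_left hδ hβ]

/-- Auxiliary inequality (Lemma `auxiliary` of the paper). -/
theorem auxiliary_inequality (β M δ a b c : ℝ) (hβ : 0 < β) (hM : 0 < M)
    (hδpos : 0 < δ)
    (hδ : δ < (1/2) * 3 ^ (β + 1) / (2 * 3 ^ (β + 1) + (2 * M) ^ (β + 1)))
    (ha : a ∈ Set.Icc (2 - δ) M) (hb : b ∈ Set.Icc (2 - δ) M)
    (hc : 0 < c) (hc1 : c ≤ min a b + δ) (hc2 : c ≤ max a b - (1 - 2 * δ)) :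
    a ^ (-β) + b ^ (-β) - 2 * c ^ (-β) ≤ -(1/2) * β * M ^ (-(β + 1)) := by
  have hsum : a ^ (-β) + b ^ (-β) = min a b ^ (-β) + max a b ^ (-β) := by
    rcases le_total a b with h | h <;> simp [h, add_comm]
  rw [hsum]
  exact rpow_neg_add_rpow_neg_sub_two_mul_le hβ.le hM hδpos.le
    (mul_three_halves_rpow_neg_add_lt hM hδ).le (le_min ha.1 hb.1) (max_le ha.2 hb.2) hc hc1 hc2
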